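/- The map f from admissible continued fractions to LR-strings is order-preserving: if v = [k_0,…,k_m] and v' = [k'_0,…,k'_n] are admissible continued fractions with rational values v < v', then r(f(v)) < r(f(v')), where f([q_0,…,q_m]) = S(q_0,…,q_{m−1},q_m − 1). -/

import Mathlib

open List

/-- `r`-value of an LR-string (`true` = R, `false` = L):
`r(ε) = 1`, `r(SL) = r(S) - 2^(-|SL|)`, `r(SR) = r(S) + 2^(-|SR|)`. -/
def rval (S : List Bool) : ℚ :=
  1 + ∑ i ∈ Finset.range S.length,
      (if S.getD i false then ((2:ℚ)^(i+1))⁻¹ else -((2:ℚ)^(i+1))⁻¹)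

/-- Generalized strings: LR-strings plus the formal symbols `R⁻¹ = inv true`
and `L⁻¹ = inv false`. -/
inductive Gen where
  | inv : Bool → Gen
  | str : List Bool → Gen
deriving DecidableEq

/-- Left parent: `P_L(ε) = R⁻¹`, `P_L(SL) = P_L(S)`, `P_L(SR) = S`. -/
def PL (S : List Bool) : Gen :=
  match S.reverse.dropWhile (· = false) with
  | [] => Gen.inv true
  | _ :: t => Gen.str t.reverse

/-- Right parent: `P_R(ε) = L⁻¹`, `P_R(SL) = S`, `P_R(SR) = P_R(S)`. -/
def PR (S : List Bool) : Gen :=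
  match S.reverse.dropWhile (· = true) with
  | [] => Gen.inv false
  | _ :: t => Gen.str t.reverse

/-- Extension of `r` to generalized strings: `r(R⁻¹) = 0`, `r(L⁻¹) = 2`. -/
def rg : Gen → ℚ
  | Gen.inv true => 0
  | Gen.inv false => 2
  | Gen.str S => rval S

/-- Length of a generalized string; the formal symbols have length `-1`. -/
def glen : Gen → ℤ
  | Gen.inv _ => -1
  | Gen.str S => S.length

/-- Position function: `N(ε) = 0`, `N(SL) = 2N(S)+1`, `N(SR) = 2N(S)+2`. -/
def posN (S : List Bool) : ℕ :=
  ∑ i ∈ Finset.range S.length, (if S.getD i false then 2 else 1) * 2^(S.length - 1 - i)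

/-- The alternating-block string `S(k₀,…,k_m) = R^{k₀} L^{k₁} R^{k₂} ⋯`. -/
def blockStr (ks : List ℕ) : List Bool :=
  (ks.zipIdx.map (fun p => List.replicate p.1 (decide (p.2 % 2 = 0)))).flatten

/-- Continued fraction `[q₀,…,q_m]`. -/
def cf : List ℚ → ℚ
  | [] => 0
  | [q] => q
  | q :: qs => q + (cf qs)⁻¹

/-- Admissible continued-fraction index sequences: `[q₀]` with `q₀ ≥ 1`, or
`[q₀,…,q_m]` with `m ≥ 1`, intermediate `qᵢ ≥ 1`, and `q_m ≥ 2`. -/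
def CFAdmissible (qs : List ℕ) : Prop :=
  qs ≠ [] ∧ (qs.length = 1 → 1 ≤ qs.getD 0 0) ∧
    (∀ i, 1 ≤ i → i + 1 < qs.length → 1 ≤ qs.getD i 0) ∧
    (2 ≤ qs.length → 2 ≤ qs.getLastD 0)

/-- The map `f([q₀,…,q_m]) = S(q₀,…,q_{m-1},q_m - 1)`. -/
def cfToStr (qs : List ℕ) : List Bool :=
  blockStr (qs.dropLast ++ [qs.getLastD 0 - 1])

/-!
Write `v(t)` for the value of the continued fraction `[t, 1]` and `ρ(t) = r(blockStr t)`. Since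
`blockStr (m :: t)` is `R^m` followed by `blockStr t` with `L` and `R` swapped, and the swap sends
`r` to `2 - r`, we get `ρ(m :: t) = 2 - ρ(t) / 2^m`, alongside `v(m :: t) = m + 1 / v(t)`.
For tails with entries `≥ 1` we have `v(t) ≥ 1` and `ρ(t) ∈ [1, 2)`, so the head `m` places `v`
in `(m, m + 1]` and `ρ` in `(2 - 2/2^m, 2 - 1/2^m]`. Distinct heads therefore order both sides
alike, and for equal heads both recursions reverse the order of the tails, so induction on the
lengths concludes.
-/

theorem rval_nil : rval [] = 1 := by simp [rval]

theorem rval_cons (b : Bool) (T : List Bool) :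
    rval (b :: T) = ((if b then 2 else 0) + rval T) / 2 := by
  have shift : (∑ i ∈ Finset.range T.length,
        if T.getD i false then ((2:ℚ) ^ (i + 1 + 1))⁻¹ else -((2:ℚ) ^ (i + 1 + 1))⁻¹) =
      (∑ i ∈ Finset.range T.length,
        if T.getD i false then ((2:ℚ) ^ (i + 1))⁻¹ else -((2:ℚ) ^ (i + 1))⁻¹) / 2 := by
    rw [Finset.sum_div]
    refine Finset.sum_congr rfl fun i _ => ?_
    split <;> ring
  simp only [rval, List.length_cons, Finset.sum_range_succ', List.getD_cons_succ,
    List.getD_cons_zero, shift]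
  cases b <;> norm_num <;> ring

theorem rval_map_not (S : List Bool) : rval (S.map not) = 2 - rval S := by
  induction S with
  | nil => norm_num [rval_nil]
  | cons b T ih => cases b <;> simp only [List.map_cons, rval_cons, ih] <;> norm_num <;> ring

theorem rval_replicate_true_append (m : ℕ) (T : List Bool) :
    rval (List.replicate m true ++ T) = 2 - (2 - rval T) / 2 ^ m := by
  induction m with
  | zero => simp
  | succ m ih =>
    rw [List.replicate_succ, List.cons_append, rval_cons, ih, pow_succ]
    simp only [if_true]
    field_simp
    ring

theorem blockStr_zipIdx_succ (t : List ℕ) (n : ℕ) :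
    (t.zipIdx (n + 1)).flatMap (fun p => List.replicate p.1 (decide (p.2 % 2 = 0))) =
      ((t.zipIdx n).flatMap (fun p => List.replicate p.1 (decide (p.2 % 2 = 0)))).map not := by
  induction t generalizing n with
  | nil => rfl
  | cons m t ih =>
    simp only [List.zipIdx_cons, List.flatMap_cons, List.map_append, List.map_replicate, ih]
    congr 2
    rcases Nat.mod_two_eq_zero_or_one n with h | h <;> simp [h, Nat.succ_mod_two_eq_zero_iff]

theorem blockStr_cons (m : ℕ) (t : List ℕ) :
    blockStr (m :: t) = List.replicate m true ++ (blockStr t).map not := by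
  simpa [blockStr, List.flatMap] using blockStr_zipIdx_succ t 0

theorem rval_blockStr_nil : rval (blockStr []) = 1 := rval_nil

theorem rval_blockStr_cons (m : ℕ) (t : List ℕ) :
    rval (blockStr (m :: t)) = 2 - rval (blockStr t) / 2 ^ m := by
  rw [blockStr_cons, rval_replicate_true_append, rval_map_not]
  ring

/-- `cfAppendOne [m₀, …, m_k]` is the continued fraction `[m₀, …, m_k, 1] = [m₀, …, m_k + 1]`. -/
def cfAppendOne : List ℕ → ℚ
  | [] => 1
  | m :: t => m + (cfAppendOne t)⁻¹

theorem one_le_cfAppendOne {t : List ℕ} (ht : ∀ x ∈ t, 1 ≤ x) : 1 ≤ cfAppendOne t := by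
  induction t with
  | nil => simp [cfAppendOne]
  | cons m t ih =>
    rw [List.forall_mem_cons] at ht
    have hm : (1 : ℚ) ≤ m := by exact_mod_cast ht.1
    have := ih ht.2
    simp only [cfAppendOne]
    have : 0 ≤ (cfAppendOne t)⁻¹ := by positivity
    linarith

theorem cfAppendOne_cons_mem_Ioc (m : ℕ) {t : List ℕ} (ht : ∀ x ∈ t, 1 ≤ x) :
    (m : ℚ) < cfAppendOne (m :: t) ∧ cfAppendOne (m :: t) ≤ m + 1 := by
  have h1 := one_le_cfAppendOne ht
  have : 0 < (cfAppendOne t)⁻¹ := by positivity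
  have : (cfAppendOne t)⁻¹ ≤ 1 := inv_le_one_of_one_le₀ h1
  simp only [cfAppendOne]
  constructor <;> linarith

theorem rval_blockStr_mem_Ico {t : List ℕ} (ht : ∀ x ∈ t, 1 ≤ x) :
    1 ≤ rval (blockStr t) ∧ rval (blockStr t) < 2 := by
  induction t with
  | nil => rw [rval_blockStr_nil]; norm_num
  | cons m t ih =>
    rw [List.forall_mem_cons] at ht
    obtain ⟨h1, h2⟩ := ih ht.2
    have hm : (2 : ℚ) ≤ 2 ^ m := le_self_pow₀ (by norm_num) (by omega)
    rw [rval_blockStr_cons]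
    have : 0 < rval (blockStr t) / 2 ^ m := by positivity
    have : rval (blockStr t) / 2 ^ m < 1 := by rw [div_lt_one (by positivity)]; linarith
    constructor <;> linarith

theorem rval_blockStr_cons_mem_Ioc (m : ℕ) {t : List ℕ} (ht : ∀ x ∈ t, 1 ≤ x) :
    2 - 2 / 2 ^ m < rval (blockStr (m :: t)) ∧ rval (blockStr (m :: t)) ≤ 2 - 1 / 2 ^ m := by
  obtain ⟨h1, h2⟩ := rval_blockStr_mem_Ico ht
  rw [rval_blockStr_cons]
  constructor <;> gcongr

theorem rval_blockStr_cons_lt_of_tail {m m' : ℕ} {t t' : List ℕ} (ht : ∀ x ∈ t, 1 ≤ x)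
    (ht' : ∀ x ∈ t', 1 ≤ x)
    (htail : cfAppendOne t' < cfAppendOne t → rval (blockStr t') < rval (blockStr t))
    (h : cfAppendOne (m :: t) < cfAppendOne (m' :: t')) :
    rval (blockStr (m :: t)) < rval (blockStr (m' :: t')) := by
  obtain ⟨hv, hv'⟩ := cfAppendOne_cons_mem_Ioc m ht
  obtain ⟨hw, hw'⟩ := cfAppendOne_cons_mem_Ioc m' ht'
  obtain ⟨-, hr⟩ := rval_blockStr_cons_mem_Ioc m ht
  obtain ⟨hr', -⟩ := rval_blockStr_cons_mem_Ioc m' ht'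
  rcases lt_trichotomy m m' with hmm | rfl | hmm
  · have : (2 : ℚ) / 2 ^ m' ≤ 1 / 2 ^ m := by
      have := pow_le_pow_right₀ (by norm_num : (1 : ℚ) ≤ 2) (Nat.succ_le_of_lt hmm)
      rw [pow_succ'] at this
      rw [div_le_div_iff₀ (by positivity) (by positivity)]
      linarith
    linarith
  · have hinv : (cfAppendOne t)⁻¹ < (cfAppendOne t')⁻¹ := by
      simp only [cfAppendOne] at h
      linarith
    have := htail ((inv_lt_inv₀ (by linarith [one_le_cfAppendOne ht])
      (by linarith [one_le_cfAppendOne ht'])).1 hinv)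
    rw [rval_blockStr_cons, rval_blockStr_cons]
    gcongr
  · have : (m' : ℚ) + 1 ≤ m := by exact_mod_cast hmm
    linarith

theorem rval_blockStr_lt_of_cfAppendOne_lt : ∀ {t t' : List ℕ}, (∀ x ∈ t, 1 ≤ x) →
    (∀ x ∈ t', 1 ≤ x) → cfAppendOne t < cfAppendOne t' → rval (blockStr t) < rval (blockStr t')
  | _, [], ht, _, h => absurd h (not_lt.2 (one_le_cfAppendOne ht))
  | [], m' :: s', _, ht', _ => by
    rw [List.forall_mem_cons] at ht'
    have hm : (2 : ℚ) ≤ 2 ^ m' := le_self_pow₀ (by norm_num) (by omega)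
    have : 2 / 2 ^ m' ≤ (1 : ℚ) := by rw [div_le_one (by positivity)]; exact hm
    rw [rval_blockStr_nil]
    linarith [(rval_blockStr_cons_mem_Ioc m' ht'.2).1]
  | m :: s, m' :: s', ht, ht', h => by
    rw [List.forall_mem_cons] at ht ht'
    exact rval_blockStr_cons_lt_of_tail ht.2 ht'.2
      (rval_blockStr_lt_of_cfAppendOne_lt ht'.2 ht.2) h
termination_by t t' => t.length + t'.length

theorem cf_cons_of_ne_nil (q : ℚ) {qs : List ℚ} (h : qs ≠ []) : cf (q :: qs) = q + (cf qs)⁻¹ := by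
  cases qs with
  | nil => exact absurd rfl h
  | cons _ _ => rfl

theorem cf_map_append_singleton (l : List ℕ) {q : ℕ} (hq : 1 ≤ q) :
    cf ((l ++ [q]).map ((↑) : ℕ → ℚ)) = cfAppendOne (l ++ [q - 1]) := by
  induction l with
  | nil => simp [cf, cfAppendOne, Nat.cast_sub hq]
  | cons a l ih =>
    rw [List.cons_append, List.map_cons, cf_cons_of_ne_nil _ (by simp), ih]
    rfl

theorem cfToStr_append_singleton (l : List ℕ) (q : ℕ) :
    cfToStr (l ++ [q]) = blockStr (l ++ [q - 1]) := by
  simp [cfToStr]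

theorem CFAdmissible.exists_cons {l : List ℕ} {q : ℕ} (h : CFAdmissible (l ++ [q])) :
    1 ≤ q ∧ ∃ m t, l ++ [q - 1] = m :: t ∧ ∀ x ∈ t, 1 ≤ x := by
  obtain ⟨-, hsingle, hmid, hlast⟩ := h
  cases l with
  | nil => exact ⟨by simpa using hsingle rfl, q - 1, [], rfl, by simp⟩
  | cons a l =>
    have hq : 2 ≤ q := by
      simpa only [List.getLastD_eq_getLast?, List.getLast?_concat, Option.getD_some]
        using hlast (by simp)
    refine ⟨by omega, a, l ++ [q - 1], rfl, ?_⟩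
    simp only [List.mem_append, List.mem_singleton]
    rintro x (hx | rfl)
    · obtain ⟨i, hi, rfl⟩ := List.getElem_of_mem hx
      simpa [List.getElem?_append_left hi, List.getElem?_eq_getElem hi]
        using hmid (i + 1) (by omega) (by simp; omega)
    · omega

/-- The binder type of `fun q => (q : ℚ)` is elaborated late, so `ks.map (fun q => (q : ℚ))`
first coerces `ks` to a `List ℚ` by a monadic lift and then maps the identity over it. -/
theorem list_coe_eq_map_cast (ks : List ℕ) :
    ks.map (fun q => (q : ℚ)) = ks.map ((↑) : ℕ → ℚ) := by
  simp [List.map_eq_flatMap]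

/-- Theorem 3.1(c): `f` is order-preserving: if admissible continued fractions
satisfy `v < v'` as rationals, then `r(f(v)) < r(f(v'))`. -/
theorem stmt18 (ks ks' : List ℕ) (h : CFAdmissible ks) (h' : CFAdmissible ks')
    (hlt : cf (ks.map (fun q => (q : ℚ))) < cf (ks'.map (fun q => (q : ℚ)))) :
    rval (cfToStr ks) < rval (cfToStr ks') := by
  obtain ⟨l, q, rfl⟩ := (List.eq_nil_or_concat' ks).resolve_left h.1
  obtain ⟨l', q', rfl⟩ := (List.eq_nil_or_concat' ks').resolve_left h'.1
  obtain ⟨hq, m, t, hmt, ht⟩ := h.exists_cons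
  obtain ⟨hq', m', t', hmt', ht'⟩ := h'.exists_cons
  rw [list_coe_eq_map_cast, list_coe_eq_map_cast, cf_map_append_singleton l hq,
    cf_map_append_singleton l' hq', hmt, hmt'] at hlt
  rw [cfToStr_append_singleton, cfToStr_append_singleton, hmt, hmt']
  exact rval_blockStr_cons_lt_of_tail ht ht' (rval_blockStr_lt_of_cfAppendOne_lt ht' ht) hlt
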